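/- arXiv:2105.03158 — 2 statements merged into one kernel-verified Lean document; each statement's English description precedes it below -/
import Mathlib

section
/- At any equilibrium of the power network with distributed power command dynamics, the frequency deviation at every bus equals zero. Precisely: suppose ω : N → ℝ, p^M : N → ℝ, d^u : N → ℝ, p : E → ℝ, ψ : E~ → ℝ satisfy (i) ω_i = ω_j for all (i,j) ∈ E (a connected graph); (ii) for each bus j, 0 = p^M_j − p^L_j − d^u_j − D_j − Σ_{k: (j,k)∈E} p_{jk} + Σ_{i: (i,j)∈E} p_{ij}; (iii) d^u_j = A_j ω_j with A_j > 0; (iv) for each bus j, p^M_j = D_j + p^L_j − Σ_{k: (j,k)∈E~} ψ_{jk} + Σ_{i: (i,j)∈E~} ψ_{ij}. Then ω_j = 0 for all j ∈ N. -/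
open Finset

lemma sum_filter_fst {N : Type*} [Fintype N] [DecidableEq N]
    (E : Finset (N × N)) (f : N × N → ℝ) :
    ∑ j : N, ∑ e ∈ E.filter (fun e => e.1 = j), f e = ∑ e ∈ E, f e :=
  Finset.sum_fiberwise_of_maps_to (fun e _ => Finset.mem_univ e.1) f

lemma sum_filter_snd {N : Type*} [Fintype N] [DecidableEq N]
    (E : Finset (N × N)) (f : N × N → ℝ) :
    ∑ j : N, ∑ e ∈ E.filter (fun e => e.2 = j), f e = ∑ e ∈ E, f e :=
  Finset.sum_fiberwise_of_maps_to (fun e _ => Finset.mem_univ e.2) f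

/-- At any equilibrium of the power network with distributed power command
dynamics, the frequency deviation at every bus is zero. -/
theorem stmt_1 {N : Type*} [Fintype N] [Nonempty N] [DecidableEq N]
    (E Etil : Finset (N × N))
    (ω pM du pL D A : N → ℝ)
    (p : N × N → ℝ) (ψ : N × N → ℝ)
    (hA : ∀ j, 0 < A j)
    -- (i) frequencies agree across transmission edges of a connected graph
    (hconn : ∀ i j : N,
      Relation.ReflTransGen (fun a b => (a, b) ∈ E ∨ (b, a) ∈ E) i j)
    (hω : ∀ e ∈ E, ω e.1 = ω e.2)
    -- (ii) power balance at each bus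
    (hbal : ∀ j : N, 0 = pM j - pL j - du j - D j
      - ∑ e ∈ E.filter (fun e => e.1 = j), p e
      + ∑ e ∈ E.filter (fun e => e.2 = j), p e)
    -- (iii) frequency-dependent demand
    (hdu : ∀ j : N, du j = A j * ω j)
    -- (iv) power command equilibrium equation
    (hpc : ∀ j : N, pM j = D j + pL j
      - ∑ e ∈ Etil.filter (fun e => e.1 = j), ψ e
      + ∑ e ∈ Etil.filter (fun e => e.2 = j), ψ e) :
    ∀ j : N, ω j = 0 := by
  -- all frequencies are equal
  have hωeq : ∀ i j : N, ω i = ω j := by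
    intro i j
    induction hconn i j with
    | refl => rfl
    | tail _ h ih =>
      rcases h with h | h
      · exact ih.trans (hω _ h)
      · exact ih.trans (hω _ h).symm
  intro j0
  -- sum the balance equations over all buses
  have hsum : (0 : ℝ) = ∑ j : N, (pM j - pL j - du j - D j
      - ∑ e ∈ E.filter (fun e => e.1 = j), p e
      + ∑ e ∈ E.filter (fun e => e.2 = j), p e) := by
    rw [← Finset.sum_const_zero (s := (Finset.univ : Finset N))]
    exact Finset.sum_congr rfl (fun j _ => hbal j)
  have h1 : (0 : ℝ) = ∑ j : N, (pM j - pL j - du j - D j) := by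
    rw [hsum]
    simp only [Finset.sum_add_distrib, Finset.sum_sub_distrib,
      sum_filter_fst, sum_filter_snd]
    ring
  have h2 : ∀ j : N, pM j - pL j - du j - D j
      = - A j * ω j - ∑ e ∈ Etil.filter (fun e => e.1 = j), ψ e
        + ∑ e ∈ Etil.filter (fun e => e.2 = j), ψ e := by
    intro j; rw [hpc j, hdu j]; ring
  have h3 : (0 : ℝ) = ∑ j : N, (- A j * ω j) := by
    rw [h1]
    simp only [h2, Finset.sum_add_distrib, Finset.sum_sub_distrib,
      sum_filter_fst, sum_filter_snd]
    ring
  -- rewrite all ω j as ω j0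
  have h4 : (0 : ℝ) = - (∑ j : N, A j) * ω j0 := by
    rw [h3]
    rw [neg_mul, Finset.sum_mul, ← Finset.sum_neg_distrib]
    exact Finset.sum_congr rfl fun j _ => by rw [hωeq j j0]; ring
  have hApos : 0 < ∑ j : N, A j :=
    Finset.sum_pos (fun j _ => hA j) Finset.univ_nonempty
  have := h4
  nlinarith [hApos, sq_nonneg (ω j0)]
end

section
/- Existence of an ε-feasible equilibrium: let L be a finite set of loads with magnitudes d̄_l > 0, costs c_l > 0, desired states ρ_l ∈ {0,1}, K > 0, ℓ ∈ ℝ, and β = max_l d̄_l. Then there exist σ* ∈ {0,1}^L and ζ ∈ ℝ such that, with p* := (ℓ + Σ_l d̄_l σ*_l)/K, one has p* − β/K ≤ ζ ≤ p*, and for every l: if ζ > c_l/d̄_l then σ*_l = 0; if |ζ| < c_l/d̄_l then σ*_l = ρ_l; if ζ < −c_l/d̄_l then σ*_l = 1; with σ*_l ∈ {0, ρ_l} allowed when ζ = c_l/d̄_l and σ*_l ∈ {ρ_l, 1} allowed when ζ = −c_l/d̄_l. -/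
open Finset

section Aux

set_option linter.unusedSectionVars false

variable {L : Type*} [Fintype L] [Nonempty L]

/-- Maximal best response. -/
noncomputable def sigP (r ρ : L → ℝ) (ζ : ℝ) (l : L) : ℝ :=
  if ζ ≤ -r l then 1 else if ζ ≤ r l then ρ l else 0

/-- Minimal best response. -/
noncomputable def sigM (r ρ : L → ℝ) (ζ : ℝ) (l : L) : ℝ :=
  if ζ < -r l then 1 else if ζ < r l then ρ l else 0

/-- Price of a configuration. -/
noncomputable def prc (dbar : L → ℝ) (K ℓ : ℝ) (σ : L → ℝ) : ℝ :=
  (ℓ + ∑ l, dbar l * σ l) / K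

lemma sigM_le_sigP (r ρ : L → ℝ) (hρ0 : ∀ l, 0 ≤ ρ l) (hρ1 : ∀ l, ρ l ≤ 1)
    (ζ : ℝ) (l : L) : sigM r ρ ζ l ≤ sigP r ρ ζ l := by
  have h0 := hρ0 l; have h1 := hρ1 l
  unfold sigM sigP
  split_ifs <;> linarith

lemma sigP_le_sigM_add_one (r ρ : L → ℝ) (hρ0 : ∀ l, 0 ≤ ρ l) (hρ1 : ∀ l, ρ l ≤ 1)
    (ζ : ℝ) (l : L) : sigP r ρ ζ l ≤ sigM r ρ ζ l + 1 := by
  have h0 := hρ0 l; have h1 := hρ1 l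
  unfold sigM sigP
  split_ifs <;> linarith

lemma sigP_le_one (r ρ : L → ℝ) (hρ1 : ∀ l, ρ l ≤ 1) (ζ : ℝ) (l : L) :
    sigP r ρ ζ l ≤ 1 := by
  have h1 := hρ1 l; unfold sigP; split_ifs <;> linarith

lemma sig_binary (r ρ : L → ℝ) (hρ : ∀ l, ρ l = 0 ∨ ρ l = 1) (ζ : ℝ) (l : L) (v : ℝ)
    (hv : v = sigM r ρ ζ l ∨ v = sigP r ρ ζ l) : v = 0 ∨ v = 1 := by
  have := hρ l
  rcases hv with hv | hv <;> rw [hv] <;> simp only [sigM, sigP] <;> split_ifs <;>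
    rcases this with h | h <;> simp [h]

lemma prc_mono (dbar : L → ℝ) (hd : ∀ l, 0 < dbar l) (K ℓ : ℝ) (hK : 0 < K)
    {σ₁ σ₂ : L → ℝ} (h : ∀ l, σ₁ l ≤ σ₂ l) :
    prc dbar K ℓ σ₁ ≤ prc dbar K ℓ σ₂ := by
  unfold prc
  have hs : ∑ l, dbar l * σ₁ l ≤ ∑ l, dbar l * σ₂ l :=
    Finset.sum_le_sum (fun l _ => mul_le_mul_of_nonneg_left (h l) (hd l).le)
  exact (div_le_div_iff_of_pos_right hK).mpr (by linarith)

/-- Any value between the minimal and maximal best response satisfies the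
five switching conditions. -/
lemma conds (r ρ : L → ℝ) (hr : ∀ l, 0 < r l) (Z : ℝ) (l : L) (v : ℝ)
    (hv : v = sigM r ρ Z l ∨ v = sigP r ρ Z l) :
    (Z > r l → v = 0) ∧ (Z = r l → v = 0 ∨ v = ρ l) ∧ (|Z| < r l → v = ρ l) ∧
    (Z = -(r l) → v = ρ l ∨ v = 1) ∧ (Z < -(r l) → v = 1) := by
  have hrl := hr l
  refine ⟨?_, ?_, ?_, ?_, ?_⟩ <;> intro h <;>
    (try replace h := abs_lt.mp h) <;> (try obtain ⟨ha, hb⟩ := h) <;>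
    rcases hv with hv | hv <;> rw [hv] <;> simp only [sigM, sigP] <;> split_ifs <;>
      first
        | rfl
        | (left; rfl)
        | (right; rfl)
        | (exfalso; linarith)

end Aux

/-- Existence of an equilibrium satisfying the ε-optimality conditions with
`θ = β` (Lemma 2): there exist a binary vector `σ*` and a price `ζ` such that,
with `p* = (ℓ + ∑ d̄_l σ*_l)/K`, we have `p* − β/K ≤ ζ ≤ p*` and the
five-case switching conditions hold. -/
theorem stmt_12 {L : Type*} [Fintype L] [Nonempty L]
    (dbar c ρ : L → ℝ)
    (hd : ∀ l, 0 < dbar l) (hc : ∀ l, 0 < c l)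
    (hρ : ∀ l, ρ l = 0 ∨ ρ l = 1)
    (K ℓ : ℝ) (hK : 0 < K)
    (β : ℝ) (hβ : β = Finset.univ.sup' Finset.univ_nonempty dbar) :
    ∃ (σ : L → ℝ) (ζ : ℝ),
      (∀ l, σ l = 0 ∨ σ l = 1) ∧
      ((ℓ + ∑ l : L, dbar l * σ l) / K - β / K ≤ ζ) ∧
      (ζ ≤ (ℓ + ∑ l : L, dbar l * σ l) / K) ∧
      (∀ l : L,
        (ζ > c l / dbar l → σ l = 0) ∧
        (ζ = c l / dbar l → σ l = 0 ∨ σ l = ρ l) ∧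
        (|ζ| < c l / dbar l → σ l = ρ l) ∧
        (ζ = -(c l / dbar l) → σ l = ρ l ∨ σ l = 1) ∧
        (ζ < -(c l / dbar l) → σ l = 1)) := by
  classical
  set r : L → ℝ := fun l => c l / dbar l with hrdef
  have hrpos : ∀ l, 0 < r l := fun l => div_pos (hc l) (hd l)
  have hρ0 : ∀ l, 0 ≤ ρ l := fun l => by rcases hρ l with h | h <;> rw [h] <;> norm_num
  have hρ1 : ∀ l, ρ l ≤ 1 := fun l => by rcases hρ l with h | h <;> rw [h] <;> norm_num
  have hβd : ∀ l, dbar l ≤ β := fun l => hβ ▸ Finset.le_sup' dbar (mem_univ l)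
  have hβpos : 0 < β := lt_of_lt_of_le (hd (Classical.arbitrary L)) (hβd _)
  -- the set of prices below the (maximal) aggregate response
  set A : Set ℝ := {ζ | ζ ≤ prc dbar K ℓ (sigP r ρ ζ)} with hAdef
  -- A is nonempty
  set ub : ℝ := prc dbar K ℓ (fun _ => 1) with hubdef
  have hAne : A.Nonempty := by
    refine ⟨min (univ.inf' Finset.univ_nonempty (fun l => -r l)) ub, ?_⟩
    have h1 : sigP r ρ (min (univ.inf' Finset.univ_nonempty (fun l => -r l)) ub) =
        fun _ => 1 := by
      funext l
      have : min (univ.inf' Finset.univ_nonempty (fun l => -r l)) ub ≤ -r l :=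
        le_trans (min_le_left _ _) (Finset.inf'_le _ (mem_univ l))
      simp [sigP, this]
    show _ ≤ prc dbar K ℓ _
    rw [h1]
    exact min_le_right _ _
  -- A is bounded above
  have hAbdd : BddAbove A := by
    refine ⟨ub, fun ζ hζ => ?_⟩
    refine le_trans hζ (prc_mono dbar hd K ℓ hK (fun l => ?_))
    exact sigP_le_one r ρ hρ1 ζ l
  set Z : ℝ := sSup A with hZdef
  have hub : ∀ ζ ∈ A, ζ ≤ Z := fun ζ h => le_csSup hAbdd h
  -- left constancy radius
  set δL : ℝ := univ.inf' Finset.univ_nonempty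
      (fun l => if Z ≤ -r l then 1 else if Z ≤ r l then Z + r l else Z - r l) with hδLdef
  have hδL : 0 < δL := by
    rw [hδLdef, Finset.lt_inf'_iff]
    intro l _
    have := hrpos l
    split_ifs <;> linarith
  have hleft : ∀ ζ, Z - δL < ζ → ζ ≤ Z → sigP r ρ ζ = sigP r ρ Z := by
    intro ζ h1 h2
    funext l
    have hl : δL ≤ (if Z ≤ -r l then 1 else if Z ≤ r l then Z + r l else Z - r l) :=
      hδLdef ▸ Finset.inf'_le _ (mem_univ l)
    have := hrpos l
    unfold sigP
    split_ifs at hl ⊢ <;> first | rfl | linarith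
  -- Z itself is in A
  have hZA : Z ≤ prc dbar K ℓ (sigP r ρ Z) := by
    by_contra h
    push_neg at h
    obtain ⟨ζ, hζA, hζgt⟩ := exists_lt_of_lt_csSup hAne
      (show max (Z - δL) (prc dbar K ℓ (sigP r ρ Z)) < Z from max_lt (by linarith) h)
    have hζle : ζ ≤ Z := hub ζ hζA
    have heq := hleft ζ (lt_of_le_of_lt (le_max_left _ _) hζgt) hζle
    have hmem : ζ ≤ prc dbar K ℓ (sigP r ρ ζ) := hζA
    rw [heq] at hmem
    exact absurd hmem (not_le.mpr (lt_of_le_of_lt (le_max_right _ _) hζgt))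
  -- right constancy radius
  set δR : ℝ := univ.inf' Finset.univ_nonempty
      (fun l => if Z < -r l then -r l - Z else if Z < r l then r l - Z else 1) with hδRdef
  have hδR : 0 < δR := by
    rw [hδRdef, Finset.lt_inf'_iff]
    intro l _
    have := hrpos l
    split_ifs <;> linarith
  have hright : ∀ ζ, Z < ζ → ζ < Z + δR → sigP r ρ ζ = sigM r ρ Z := by
    intro ζ h1 h2
    funext l
    have hl : δR ≤ (if Z < -r l then -r l - Z else if Z < r l then r l - Z else 1) :=
      hδRdef ▸ Finset.inf'_le _ (mem_univ l)
    have := hrpos l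
    unfold sigP sigM
    split_ifs at hl ⊢ <;> first | rfl | linarith
  -- the minimal response price is below Z
  have hM : prc dbar K ℓ (sigM r ρ Z) ≤ Z := by
    by_contra h
    push_neg at h
    have h1 : Z < min (Z + δR / 2) (prc dbar K ℓ (sigM r ρ Z)) := lt_min (by linarith) h
    have h2 : min (Z + δR / 2) (prc dbar K ℓ (sigM r ρ Z)) < Z + δR :=
      lt_of_le_of_lt (min_le_left _ _) (by linarith)
    have h3 := hright _ h1 h2
    have h4 : min (Z + δR / 2) (prc dbar K ℓ (sigM r ρ Z)) ∉ A := by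
      intro hmem
      exact absurd (hub _ hmem) (not_le.mpr h1)
    have h5 : ¬ (min (Z + δR / 2) (prc dbar K ℓ (sigM r ρ Z)) ≤
        prc dbar K ℓ (sigP r ρ (min (Z + δR / 2) (prc dbar K ℓ (sigM r ρ Z))))) := h4
    rw [h3] at h5
    exact h5 (min_le_right _ _)
  -- intermediate configurations
  set σS : Finset L → L → ℝ :=
    fun S l => if l ∈ S then sigP r ρ Z l else sigM r ρ Z l with hσSdef
  have hstep : ∀ (S : Finset L) (l : L), l ∈ S →
      prc dbar K ℓ (σS S) ≤ prc dbar K ℓ (σS (S.erase l)) + β / K := by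
    intro S l hl
    have e1 : ∑ k, dbar k * σS S k =
        dbar l * σS S l + ∑ k ∈ univ.erase l, dbar k * σS S k :=
      (Finset.add_sum_erase univ _ (mem_univ l)).symm
    have e2 : ∑ k, dbar k * σS (S.erase l) k =
        dbar l * σS (S.erase l) l + ∑ k ∈ univ.erase l, dbar k * σS (S.erase l) k :=
      (Finset.add_sum_erase univ _ (mem_univ l)).symm
    have e3 : ∑ k ∈ univ.erase l, dbar k * σS S k =
        ∑ k ∈ univ.erase l, dbar k * σS (S.erase l) k := by
      refine Finset.sum_congr rfl (fun k hk => ?_)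
      have hkl : k ≠ l := (Finset.mem_erase.mp hk).1
      simp [hσSdef, Finset.mem_erase, hkl]
    have e4 : σS S l = sigP r ρ Z l := by simp [hσSdef, hl]
    have e5 : σS (S.erase l) l = sigM r ρ Z l := by
      simp [hσSdef, Finset.notMem_erase]
    have e6 : dbar l * sigP r ρ Z l ≤ dbar l * sigM r ρ Z l + β := by
      have := mul_le_mul_of_nonneg_left (sigP_le_sigM_add_one r ρ hρ0 hρ1 Z l) (hd l).le
      have := hβd l
      nlinarith [hd l]
    have hsum : ∑ k, dbar k * σS S k ≤ (∑ k, dbar k * σS (S.erase l) k) + β := by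
      rw [e1, e2, e3, e4, e5]; linarith
    unfold prc
    rw [← add_div]
    exact (div_le_div_iff_of_pos_right hK).mpr (by linarith)
  -- the chain argument
  have chain : ∀ (n : ℕ) (S : Finset L), S.card ≤ n → Z ≤ prc dbar K ℓ (σS S) →
      ∃ S', Z ≤ prc dbar K ℓ (σS S') ∧ prc dbar K ℓ (σS S') ≤ Z + β / K := by
    intro n
    induction n with
    | zero =>
      intro S hcard hZle
      have hS : S = ∅ := Finset.card_eq_zero.mp (Nat.le_zero.mp hcard)
      subst hS
      have hempty : σS ∅ = sigM r ρ Z := by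
        funext l; simp [hσSdef]
      refine ⟨∅, hZle, ?_⟩
      rw [hempty] at hZle ⊢
      have : 0 < β / K := div_pos hβpos hK
      linarith
    | succ n ih =>
      intro S hcard hZle
      by_cases hle : prc dbar K ℓ (σS S) ≤ Z + β / K
      · exact ⟨S, hZle, hle⟩
      · push_neg at hle
        have hS : S.Nonempty := by
          rcases Finset.eq_empty_or_nonempty S with h | h
          · exfalso
            subst h
            have hempty : σS ∅ = sigM r ρ Z := by funext l; simp [hσSdef]
            rw [hempty] at hle
            have : 0 < β / K := div_pos hβpos hK
            linarith
          · exact h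
        obtain ⟨l, hl⟩ := hS
        have h2 := hstep S l hl
        refine ih (S.erase l) ?_ (by linarith)
        have := Finset.card_erase_of_mem hl
        omega
  -- kick off the chain from the full tie set
  set T : Finset L := univ.filter (fun l => sigM r ρ Z l ≠ sigP r ρ Z l) with hTdef
  have hTfull : σS T = sigP r ρ Z := by
    funext l
    by_cases h : sigM r ρ Z l = sigP r ρ Z l
    · simp [hσSdef, hTdef, h]
    · simp [hσSdef, hTdef, h]
  obtain ⟨S', h1, h2⟩ := chain T.card T le_rfl (by rw [hTfull]; exact hZA)
  -- conclude
  refine ⟨σS S', Z, ?_, ?_, ?_, ?_⟩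
  · intro l
    refine sig_binary r ρ hρ Z l (σS S' l) ?_
    by_cases h : l ∈ S' <;> simp [hσSdef, h]
  · have : prc dbar K ℓ (σS S') = (ℓ + ∑ l : L, dbar l * σS S' l) / K := rfl
    rw [this] at h2
    linarith
  · have : prc dbar K ℓ (σS S') = (ℓ + ∑ l : L, dbar l * σS S' l) / K := rfl
    rw [this] at h1
    exact h1
  · intro l
    have hv : σS S' l = sigM r ρ Z l ∨ σS S' l = sigP r ρ Z l := by
      by_cases h : l ∈ S' <;> simp [hσSdef, h]
    exact conds r ρ hrpos Z l (σS S' l) hv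
end
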